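/- Polynomial state completion: Let P_0, …, P_{m−1} be Laurent polynomials in z of degree at most n (i.e., supported on exponents in [−n, n]) such that ∑_{x=0}^{m−1} |P_x(z)|² ≤ 1 for all z on the unit circle. Then there exists a Laurent polynomial P_m of degree at most n such that ∑_{x=0}^{m} |P_x(z)|² = 1 for all z on the unit circle. -/

import Mathlib

/-!
With `Q_x = z^n P_x` and `Q_x^*(z) = z^{2n} conj(Q_x(1 / conj z))`, the polynomial
`q = z^{2n} - ∑ Q_x^* Q_x` has degree at most `4n` and equals `z^{2n} (1 - ∑ |P_x|²)` on the unit
circle. By Fejér–Riesz `q(z) = z^{2n} |w(z)|²` there with `deg w ≤ 2n`, and `P_m = z^{-n} w`.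

Fejér–Riesz is proved by induction on `N`. If `deg q ≤ 2N` and `z^{-N} q(z) ≥ 0` on the circle,
then `q` is self-inversive, so its nonzero roots come in pairs `α, 1 / conj α`; a root on the circle is double, because `z^{-N} q(z)` attains
its minimum `0` there. Each pair (or the root `0`) splits off a factor which is `z |z - α|²` on the
circle, contributing `|z - α|²` to `|w(z)|²`.
-/

/-- Evaluation of a Laurent polynomial given by its coefficient function,
supported on exponents in `[-n, n]`. -/
noncomputable def laurentEval (n : ℕ) (c : ℤ → ℂ) (z : ℂ) : ℂ :=
  ∑ k ∈ Finset.Icc (-(n : ℤ)) (n : ℤ), c k * z ^ k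

open Polynomial ComplexConjugate Complex Finset
open scoped ComplexOrder

lemma ne_zero_of_norm_eq_one {z : ℂ} (hz : ‖z‖ = 1) : z ≠ 0 :=
  norm_ne_zero_iff.mp (hz ▸ one_ne_zero)

lemma hasDerivAt_eq_zero_of_nonneg_on_real {H : ℂ → ℂ} {H' : ℂ} {x : ℝ}
    (hH : HasDerivAt H H' x) (hnonneg : ∀ θ : ℝ, 0 ≤ H θ) (hx : H x = 0) : H' = 0 := by
  have hre : H'.re = 0 := by
    refine IsLocalMin.hasDerivAt_eq_zero (Filter.Eventually.of_forall fun θ => ?_)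
      hH.real_of_complex
    simpa [hx] using (nonneg_iff.mp (hnonneg θ)).1
  have him : H'.im = 0 := by
    have hd := (hH.const_mul (-I)).real_of_complex
    simp only [neg_mul, neg_re, mul_re, I_re, zero_mul, I_im, one_mul, zero_sub, neg_neg] at hd
    have hconst : (fun θ : ℝ => (H θ).im) = fun _ => 0 :=
      funext fun θ => (nonneg_iff.mp (hnonneg θ)).2.symm
    rw [hconst] at hd
    simpa using hd.unique (hasDerivAt_const _ _)
  exact Complex.ext hre him

lemma exp_ofReal_mul_I_ne_one {θ : ℝ} (h0 : 0 < θ) (hπ : θ < Real.pi) : exp (θ * I) ≠ 1 := by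
  intro h
  have him := congrArg Complex.im h
  rw [exp_ofReal_mul_I_im, one_im] at him
  exact (Real.sin_pos_of_pos_of_lt_pi h0 hπ).ne' him

lemma nonneg_of_nonneg_on_punctured_circle {f : ℂ → ℂ} {α : ℂ} (hα : ‖α‖ = 1)
    (hf : ContinuousAt f α) (hnonneg : ∀ z : ℂ, ‖z‖ = 1 → z ≠ α → 0 ≤ f z) : 0 ≤ f α := by
  have hγ : ContinuousAt (fun θ : ℝ => α * exp (θ * I)) 0 := by fun_prop
  have hf' : ContinuousAt f (α * exp ((0 : ℝ) * I)) := by simpa using hf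
  have hlim : Filter.Tendsto (fun θ : ℝ => f (α * exp (θ * I))) (nhdsWithin 0 (Set.Ioi 0))
      (nhds (f α)) := by
    simpa [Function.comp_def] using
      (hf'.comp (f := fun θ : ℝ => α * exp (θ * I)) hγ).tendsto.mono_left nhdsWithin_le_nhds
  refine ge_of_tendsto hlim ?_
  filter_upwards [Ioo_mem_nhdsGT Real.pi_pos] with θ hθ
  refine hnonneg _ (by simp [hα, norm_exp_ofReal_mul_I]) fun h => ?_
  refine exp_ofReal_mul_I_ne_one hθ.1 hθ.2 ?_
  simpa [ne_zero_of_norm_eq_one hα] using congrArg (α⁻¹ * ·) h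

lemma infinite_setOf_norm_eq_one : {z : ℂ | ‖z‖ = 1}.Infinite := by
  refine Set.infinite_of_injOn_mapsTo (f := fun θ : ℝ => exp (θ * I)) (s := Set.Ioo 0 Real.pi)
    (fun a ha b hb hab => ?_) (fun θ _ => by simp [norm_exp_ofReal_mul_I])
    (Set.Ioo_infinite Real.pi_pos)
  apply Real.injOn_cos (Set.Ioo_subset_Icc_self ha) (Set.Ioo_subset_Icc_self hb)
  simpa [exp_ofReal_mul_I_re] using congrArg Complex.re hab

/-- Here `≤` on `ℂ` is `ComplexOrder`: `0 ≤ w` means that `w` is real and nonnegative. -/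
def IsNonnegOnCircle (N : ℕ) (q : ℂ[X]) : Prop :=
  ∀ z : ℂ, ‖z‖ = 1 → 0 ≤ q.eval z / z ^ N

/-- `-conj α (X - α) (X - 1 / conj α)` for `α ≠ 0`, written so that it is `X` for `α = 0`. -/
noncomputable def pairFactor (α : ℂ) : ℂ[X] :=
  C (1 + ‖α‖ ^ 2 : ℂ) * X - C (conj α) * X ^ 2 - C α

lemma pairFactor_zero : pairFactor 0 = X := by
  simp [pairFactor]

lemma pairFactor_eq_C_mul {α : ℂ} (hα : α ≠ 0) :
    pairFactor α = C (-conj α) * ((X - C α) * (X - C (conj α)⁻¹)) := by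
  have hinv : C (conj α) * C (conj α)⁻¹ = (1 : ℂ[X]) := by
    rw [← C_mul, mul_inv_cancel₀ (by simpa using hα), C_1]
  simp only [pairFactor, ← mul_conj', map_add, map_mul, map_neg, map_one]
  linear_combination -(X - C α) * hinv

lemma natDegree_pairFactor {α : ℂ} (hα : α ≠ 0) : (pairFactor α).natDegree = 2 := by
  rw [pairFactor_eq_C_mul hα, natDegree_C_mul (by simpa using hα),
    natDegree_mul (X_sub_C_ne_zero _) (X_sub_C_ne_zero _), natDegree_X_sub_C, natDegree_X_sub_C]

lemma eval_pairFactor {α z : ℂ} (hz : ‖z‖ = 1) : (pairFactor α).eval z = z * ‖z - α‖ ^ 2 := by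
  have hz0 := ne_zero_of_norm_eq_one hz
  simp only [pairFactor, eval_sub, eval_mul, eval_C, eval_X, eval_pow]
  rw [← mul_conj', ← mul_conj', map_sub, ← inv_eq_conj hz]
  field_simp
  ring

lemma eval_reflect_map_conj {p : ℂ[X]} {D : ℕ} (hp : p.natDegree ≤ D) {z : ℂ} (hz : z ≠ 0) :
    (reflect D (p.map (starRingEnd ℂ))).eval z = z ^ D * conj (p.eval (conj z)⁻¹) := by
  let := invertibleOfNonzero (inv_ne_zero hz)
  have h := eval₂_reflect_mul_pow (RingHom.id ℂ) z⁻¹ D (p.map (starRingEnd ℂ))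
    (natDegree_map_le.trans hp)
  have hmap : (p.map (starRingEnd ℂ)).eval z⁻¹ = conj (p.eval (conj z)⁻¹) := by
    rw [eval_map, ← eval₂_at_apply, map_inv₀, conj_conj]
  rw [invOf_eq_inv, inv_inv, ← eval, ← eval_map, map_id, hmap] at h
  rw [← h, inv_pow, mul_comm, inv_mul_cancel_right₀ (pow_ne_zero _ hz)]

lemma eval_reflect_map_conj_of_norm_eq_one {p : ℂ[X]} {D : ℕ} (hp : p.natDegree ≤ D) {z : ℂ}
    (hz : ‖z‖ = 1) : (reflect D (p.map (starRingEnd ℂ))).eval z = z ^ D * conj (p.eval z) := by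
  rw [eval_reflect_map_conj hp (ne_zero_of_norm_eq_one hz), ← inv_eq_conj hz, inv_inv]

lemma natDegree_reflect_map_conj_le {p : ℂ[X]} {D : ℕ} (hp : p.natDegree ≤ D) :
    (reflect D (p.map (starRingEnd ℂ))).natDegree ≤ D :=
  natDegree_reflect_le.trans (max_le le_rfl (natDegree_map_le.trans hp))

lemma coeff_eq_conj_coeff_zero {q : ℂ[X]} {D : ℕ}
    (hq : reflect D (q.map (starRingEnd ℂ)) = q) : q.coeff D = conj (q.coeff 0) := by
  conv_lhs => rw [← hq]
  rw [coeff_reflect, revAt_le le_rfl, Nat.sub_self, coeff_map]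

lemma isRoot_inv_conj {q : ℂ[X]} {D : ℕ} (hq : reflect D (q.map (starRingEnd ℂ)) = q)
    (hdeg : q.natDegree ≤ D) {α : ℂ} (hα : α ≠ 0) (hroot : q.IsRoot α) :
    q.IsRoot (conj α)⁻¹ := by
  rw [IsRoot, ← hq, eval_reflect_map_conj hdeg (by simpa using hα), map_inv₀, conj_conj, inv_inv,
    hroot.eq_zero, map_zero, mul_zero]

namespace IsNonnegOnCircle

variable {N : ℕ} {q : ℂ[X]}

lemma reflect_map_conj_eq_self (hq : IsNonnegOnCircle N q) (hdeg : q.natDegree ≤ 2 * N) :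
    reflect (2 * N) (q.map (starRingEnd ℂ)) = q := by
  refine eq_of_infinite_eval_eq _ _ (infinite_setOf_norm_eq_one.mono fun z hz => ?_)
  have hreal : conj (q.eval z / z ^ N) = q.eval z / z ^ N :=
    conj_eq_iff_im.mpr (nonneg_iff.mp (hq z hz)).2.symm
  rw [map_div₀, map_pow, ← inv_eq_conj hz, inv_pow, div_inv_eq_mul,
    eq_div_iff (pow_ne_zero _ (ne_zero_of_norm_eq_one hz))] at hreal
  rw [Set.mem_ofPred_eq, eval_reflect_map_conj_of_norm_eq_one hdeg hz]
  linear_combination hreal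

lemma isRoot_derivative (hq : IsNonnegOnCircle N q) {α : ℂ} (hα : ‖α‖ = 1)
    (hroot : q.IsRoot α) : q.derivative.IsRoot α := by
  have hα0 := ne_zero_of_norm_eq_one hα
  set γ : ℂ → ℂ := fun w => α * exp (w * I)
  have hγ : HasDerivAt γ (α * I) 0 := by
    simpa [γ] using (((hasDerivAt_id (0 : ℂ)).mul_const I).cexp).const_mul α
  have hγ0 : γ 0 = α := by simp [γ]
  have hH := ((q.hasDerivAt (γ 0)).comp 0 hγ).div ((hasDerivAt_id (γ 0)).pow N |>.comp 0 hγ)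
    (by simpa [hγ0] using pow_ne_zero N hα0)
  -- `θ ↦ q(α e^{iθ}) / (α e^{iθ})^N` is nonnegative and vanishes at `0`, so it is critical there.
  have hzero := hasDerivAt_eq_zero_of_nonneg_on_real (x := 0) (by rw [ofReal_zero]; exact hH)
    (fun θ => hq (γ θ) (by simp [γ, hα, norm_exp_ofReal_mul_I])) (by simp [γ, hroot.eq_zero])
  simp only [hγ0, Function.comp_apply, id, hroot.eq_zero] at hzero
  simpa [hα0, I_ne_zero] using hzero

lemma pairFactor_dvd (hq : IsNonnegOnCircle N q) (hdeg : q.natDegree ≤ 2 * N) {α : ℂ}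
    (hα : α ≠ 0) (hroot : q.IsRoot α) : pairFactor α ∣ q := by
  rw [pairFactor_eq_C_mul hα, C_mul_dvd (by simpa using hα)]
  rcases eq_or_ne α (conj α)⁻¹ with hαα | hαα
  · rcases eq_or_ne q 0 with rfl | hq0
    · exact dvd_zero _
    have hnorm : ‖α‖ = 1 := by
      have h := (mul_eq_one_iff_eq_inv₀ (by simpa using hα)).mpr hαα
      rw [mul_conj'] at h
      exact (pow_eq_one_iff_of_nonneg (norm_nonneg α) two_ne_zero).mp (by exact_mod_cast h)
    rw [← hαα, ← sq, ← le_rootMultiplicity_iff hq0, Nat.succ_le_iff,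
      one_lt_rootMultiplicity_iff_isRoot hq0]
    exact ⟨hroot, hq.isRoot_derivative hnorm hroot⟩
  · have hroot' := isRoot_inv_conj (hq.reflect_map_conj_eq_self hdeg) hdeg hα hroot
    exact (isCoprime_X_sub_C_of_isUnit_sub (sub_ne_zero.mpr hαα).isUnit).mul_dvd
      (dvd_iff_isRoot.mpr hroot) (dvd_iff_isRoot.mpr hroot')

lemma exists_eq_pairFactor_mul (hq : IsNonnegOnCircle (N + 1) q)
    (hdeg : q.natDegree ≤ 2 * (N + 1)) (hq0 : q ≠ 0) :
    ∃ α r, q = pairFactor α * r ∧ r.natDegree ≤ 2 * N := by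
  have htop := coeff_eq_conj_coeff_zero (hq.reflect_map_conj_eq_self hdeg)
  by_cases h0 : q.coeff 0 = 0
  · obtain ⟨r, rfl⟩ := X_dvd_iff.mpr h0
    have hdeg' := natDegree_le_pred hdeg (by rw [htop, h0, map_zero])
    rw [natDegree_X_mul (right_ne_zero_of_mul hq0)] at hdeg'
    exact ⟨0, r, by rw [pairFactor_zero], by omega⟩
  · have hdeg_eq : q.natDegree = 2 * (N + 1) :=
      le_antisymm hdeg (le_natDegree_of_ne_zero (by simpa [htop] using h0))
    obtain ⟨α, hα⟩ := exists_root (f := q) (natDegree_pos_iff_degree_pos.mp (by omega))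
    have hα0 : α ≠ 0 := by
      rintro rfl
      exact h0 (by rwa [coeff_zero_eq_eval_zero])
    obtain ⟨r, rfl⟩ := hq.pairFactor_dvd hdeg hα0 hα
    rw [natDegree_mul (left_ne_zero_of_mul hq0) (right_ne_zero_of_mul hq0),
      natDegree_pairFactor hα0] at hdeg_eq
    exact ⟨α, r, rfl, by omega⟩

lemma of_pairFactor_mul {α : ℂ} {r : ℂ[X]} (h : IsNonnegOnCircle (N + 1) (pairFactor α * r)) :
    IsNonnegOnCircle N r := by
  have hoff : ∀ z : ℂ, ‖z‖ = 1 → z ≠ α → 0 ≤ r.eval z / z ^ N := by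
    intro z hz hzα
    have hz0 := ne_zero_of_norm_eq_one hz
    have hq := h z hz
    rw [eval_mul, eval_pairFactor hz] at hq
    have hdiv : r.eval z / z ^ N = z * ‖z - α‖ ^ 2 * r.eval z / z ^ (N + 1) / ‖z - α‖ ^ 2 := by
      have : (‖z - α‖ : ℂ) ≠ 0 := by simpa using sub_ne_zero.mpr hzα
      field_simp
      ring
    rw [hdiv]
    exact div_nonneg hq (by exact_mod_cast sq_nonneg ‖z - α‖)
  intro z hz
  by_cases hzα : z = α
  · subst hzα
    exact nonneg_of_nonneg_on_punctured_circle (f := fun z => r.eval z / z ^ N) hz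
      (by fun_prop (disch := exact pow_ne_zero _ (ne_zero_of_norm_eq_one hz))) hoff
  · exact hoff z hz hzα

end IsNonnegOnCircle

lemma fejer_riesz_zero {q : ℂ[X]} (hdeg : q.natDegree ≤ 0) (hq : IsNonnegOnCircle 0 q) :
    ∃ w : ℂ[X], w.natDegree ≤ 0 ∧ ∀ z : ℂ, ‖z‖ = 1 → q.eval z = z ^ 0 * ‖w.eval z‖ ^ 2 := by
  obtain ⟨hre, him⟩ := nonneg_iff.mp (hq 1 (by simp))
  rw [eq_C_of_natDegree_le_zero hdeg] at hre him ⊢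
  simp only [eval_C, pow_zero, div_one] at hre him
  refine ⟨C (Real.sqrt (q.coeff 0).re : ℂ), (natDegree_C _).le, fun z _ => ?_⟩
  rw [eval_C, eval_C, pow_zero, one_mul, norm_real, Real.norm_of_nonneg (Real.sqrt_nonneg _),
    ← ofReal_pow, Real.sq_sqrt hre]
  exact Complex.ext rfl him.symm

theorem fejer_riesz {N : ℕ} {q : ℂ[X]} (hdeg : q.natDegree ≤ 2 * N)
    (hq : IsNonnegOnCircle N q) :
    ∃ w : ℂ[X], w.natDegree ≤ N ∧ ∀ z : ℂ, ‖z‖ = 1 → q.eval z = z ^ N * ‖w.eval z‖ ^ 2 := by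
  induction N generalizing q with
  | zero => exact fejer_riesz_zero hdeg hq
  | succ N ih =>
    rcases eq_or_ne q 0 with rfl | hq0
    · exact ⟨0, by simp, fun z _ => by simp⟩
    obtain ⟨α, r, rfl, hr⟩ := hq.exists_eq_pairFactor_mul hdeg hq0
    obtain ⟨w, hw, hrw⟩ := ih hr hq.of_pairFactor_mul
    refine ⟨(X - C α) * w, natDegree_mul_le.trans (by rw [natDegree_X_sub_C]; omega),
      fun z hz => ?_⟩
    rw [eval_mul, eval_pairFactor hz, hrw z hz, eval_mul, norm_mul]
    simp only [eval_sub, eval_X, eval_C]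
    push_cast
    ring

theorem exists_polynomial_completion {ι : Type*} [Fintype ι] {D : ℕ} (Q : ι → ℂ[X])
    (hdeg : ∀ x, (Q x).natDegree ≤ D)
    (hle : ∀ z : ℂ, ‖z‖ = 1 → ∑ x, ‖(Q x).eval z‖ ^ 2 ≤ 1) :
    ∃ w : ℂ[X], w.natDegree ≤ D ∧
      ∀ z : ℂ, ‖z‖ = 1 → ∑ x, ‖(Q x).eval z‖ ^ 2 + ‖w.eval z‖ ^ 2 = 1 := by
  set q : ℂ[X] := X ^ D - ∑ x, reflect D ((Q x).map (starRingEnd ℂ)) * Q x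
  have hq : ∀ z : ℂ, ‖z‖ = 1 →
      q.eval z = z ^ D * ((1 - ∑ x, ‖(Q x).eval z‖ ^ 2 : ℝ) : ℂ) := by
    intro z hz
    simp only [q, eval_sub, eval_pow, eval_X, eval_finsetSum, eval_mul,
      eval_reflect_map_conj_of_norm_eq_one (hdeg _) hz]
    push_cast
    rw [mul_sub, mul_one, mul_sum]
    exact congrArg _ (sum_congr rfl fun x _ => by rw [← mul_conj']; ring)
  have hqdeg : q.natDegree ≤ 2 * D := by
    refine (natDegree_sub_le _ _).trans (max_le ((natDegree_X_pow_le _).trans (by omega)) ?_)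
    refine natDegree_sum_le_of_forall_le _ _ fun x _ => natDegree_mul_le.trans ?_
    linarith [hdeg x, natDegree_reflect_map_conj_le (hdeg x)]
  obtain ⟨w, hw, hqw⟩ := fejer_riesz hqdeg fun z hz => by
    rw [hq z hz, mul_div_cancel_left₀ _ (pow_ne_zero _ (ne_zero_of_norm_eq_one hz)),
      zero_le_real]
    linarith [hle z hz]
  refine ⟨w, hw, fun z hz => ?_⟩
  have h := (hq z hz).symm.trans (hqw z hz)
  rw [mul_right_inj' (pow_ne_zero _ (ne_zero_of_norm_eq_one hz))] at h
  have h' : (1 - ∑ x, ‖(Q x).eval z‖ ^ 2 : ℝ) = ‖w.eval z‖ ^ 2 := by exact_mod_cast h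
  linarith

lemma pow_mul_laurentEval (n : ℕ) (c : ℤ → ℂ) {z : ℂ} (hz : z ≠ 0) :
    z ^ n * laurentEval n c z = ∑ i ∈ range (2 * n + 1), c (i - n) * z ^ i := by
  rw [laurentEval, mul_sum]
  refine sum_nbij' (fun k => (k + n).toNat) (fun i => (i : ℤ) - n) ?_ ?_ ?_ ?_ ?_ <;>
    intro a ha <;> simp only [mem_Icc, mem_range] at ha ⊢
  iterate 4 omega
  have hk : (((a + n).toNat : ℕ) : ℤ) = a + n := Int.toNat_of_nonneg (by omega)
  rw [hk, add_sub_cancel_right, ← zpow_natCast, ← zpow_natCast, hk, zpow_add₀ hz]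
  ring

noncomputable def shiftedPoly (n : ℕ) (c : ℤ → ℂ) : ℂ[X] :=
  ∑ i ∈ range (2 * n + 1), C (c (i - n)) * X ^ i

lemma natDegree_shiftedPoly_le (n : ℕ) (c : ℤ → ℂ) : (shiftedPoly n c).natDegree ≤ 2 * n :=
  natDegree_sum_le_of_forall_le _ _ fun _ hi =>
    (natDegree_C_mul_X_pow_le _ _).trans (Nat.lt_succ_iff.mp (mem_range.mp hi))

lemma norm_eval_shiftedPoly (n : ℕ) (c : ℤ → ℂ) {z : ℂ} (hz : ‖z‖ = 1) :
    ‖(shiftedPoly n c).eval z‖ = ‖laurentEval n c z‖ := by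
  simp [shiftedPoly, eval_finsetSum, ← pow_mul_laurentEval n c (ne_zero_of_norm_eq_one hz), hz]

noncomputable def laurentCoeffs (n : ℕ) (w : ℂ[X]) (k : ℤ) : ℂ :=
  if |k| ≤ n then w.coeff (k + n).toNat else 0

lemma laurentCoeffs_eq_zero {n : ℕ} (w : ℂ[X]) {k : ℤ} (hk : n < |k|) :
    laurentCoeffs n w k = 0 :=
  if_neg hk.not_ge

lemma norm_laurentEval_laurentCoeffs {n : ℕ} {w : ℂ[X]} (hw : w.natDegree ≤ 2 * n) {z : ℂ}
    (hz : ‖z‖ = 1) : ‖laurentEval n (laurentCoeffs n w) z‖ = ‖w.eval z‖ := by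
  have hshift : z ^ n * laurentEval n (laurentCoeffs n w) z = w.eval z := by
    rw [pow_mul_laurentEval n _ (ne_zero_of_norm_eq_one hz),
      eval_eq_sum_range' (Nat.lt_succ_of_le hw)]
    refine sum_congr rfl fun i hi => ?_
    have hi' := mem_range.mp hi
    rw [laurentCoeffs, if_pos (abs_le.mpr ⟨by omega, by omega⟩), sub_add_cancel,
      Int.toNat_natCast]
  rw [← hshift, norm_mul, norm_pow, hz, one_pow, one_mul]

theorem polynomial_state_completion_general (m n : ℕ) (c : Fin m → ℤ → ℂ)
    (hle : ∀ z : ℂ, ‖z‖ = 1 →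
      ∑ x : Fin m, ‖laurentEval n (c x) z‖ ^ 2 ≤ 1) :
    ∃ c' : ℤ → ℂ, (∀ k : ℤ, n < |k| → c' k = 0) ∧
      ∀ z : ℂ, ‖z‖ = 1 →
        ∑ x : Fin m, ‖laurentEval n (c x) z‖ ^ 2 +
          ‖laurentEval n c' z‖ ^ 2 = 1 := by
  obtain ⟨w, hw, hsum⟩ := exists_polynomial_completion (fun x => shiftedPoly n (c x))
    (fun x => natDegree_shiftedPoly_le n (c x))
    fun z hz => by simpa only [norm_eval_shiftedPoly n _ hz] using hle z hz
  refine ⟨laurentCoeffs n w, fun k => laurentCoeffs_eq_zero w, fun z hz => ?_⟩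
  rw [norm_laurentEval_laurentCoeffs hw hz, ← hsum z hz]
  simp only [norm_eval_shiftedPoly n _ hz]

theorem polynomial_state_completion (m n : ℕ) (c : Fin m → ℤ → ℂ)
    (hsupp : ∀ x : Fin m, ∀ k : ℤ, n < |k| → c x k = 0)
    (hle : ∀ z : ℂ, ‖z‖ = 1 →
      ∑ x : Fin m, ‖laurentEval n (c x) z‖ ^ 2 ≤ 1) :
    ∃ c' : ℤ → ℂ, (∀ k : ℤ, n < |k| → c' k = 0) ∧
      ∀ z : ℂ, ‖z‖ = 1 →
        ∑ x : Fin m, ‖laurentEval n (c x) z‖ ^ 2 +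
          ‖laurentEval n c' z‖ ^ 2 = 1 :=
  polynomial_state_completion_general m n c hle
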